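/- Let 𝒜 = {A₁, …, A_m} be a finite nonempty set of n×n real matrices all of whose entries are nonnegative. Then ρ(A₁ + ⋯ + A_m)/m ≤ ρ(𝒜) ≤ ρ(A₁ + ⋯ + A_m), i.e. the joint spectral radius of 𝒜 lies between the spectral radius of the sum A₁ + ⋯ + A_m divided by m and the spectral radius of the sum A₁ + ⋯ + A_m. -/

import Mathlib

/-- Spectral radius of a real square matrix: the largest absolute value of its
complex eigenvalues (elements of the spectrum of the complexified matrix). -/
noncomputable def specRad {n : ℕ} (A : Matrix (Fin n) (Fin n) ℝ) : ℝ :=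
  sSup {r : ℝ | ∃ μ ∈ spectrum ℂ (A.map Complex.ofReal), r = ‖μ‖}

/-- The set 𝒜^j of all products A₁A₂⋯A_j of j matrices from 𝒜. -/
def prodSet {n : ℕ} (𝒜 : Set (Matrix (Fin n) (Fin n) ℝ)) (j : ℕ) :
    Set (Matrix (Fin n) (Fin n) ℝ) :=
  {A | ∃ f : Fin j → Matrix (Fin n) (Fin n) ℝ, (∀ i, f i ∈ 𝒜) ∧ A = (List.ofFn f).prod}

/-- Joint spectral radius: ρ(𝒜) = limsup_{j→∞} (sup_{A ∈ 𝒜^j} ρ(A))^{1/j}. -/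
noncomputable def jsr {n : ℕ} (𝒜 : Set (Matrix (Fin n) (Fin n) ℝ)) : ℝ :=
  Filter.limsup
    (fun j : ℕ => (sSup (specRad '' prodSet 𝒜 j)) ^ ((1 : ℝ) / j)) Filter.atTop

/-!
Write `S = A₁ + ⋯ + A_m`. Entrywise, every product `W` of `j` of the `Aᵢ` satisfies `|W| ≤ S ^ j`,
and by Gelfand's formula (for the row-sum operator norm, which is monotone in `|·|`) domination
`|P| ≤ Q` implies `ρ(P) ≤ ρ(Q)`. Hence `ρ(W) ≤ ρ(S) ^ j`, which bounds `ρ(𝒜)` by `ρ(S)`.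

Conversely, `S ^ j` is the sum of the `m ^ j` products of length `j` and `|tr W| ≤ n ρ(W)`, so for
every `q > ρ(𝒜)` eventually `|tr S ^ j| ≤ n (m q) ^ j`. Traces of powers control the spectrum:
`tr N ^ k = ∑ d_μ μ ^ k` with multiplicities `d_μ ≥ 1`, and pairing this with the Lagrange
polynomial of an eigenvalue `μ` isolates `d_μ μ ^ k`; so `|tr N ^ k| ≤ C r ^ k` forces `|μ| ≤ r`.
This gives `ρ(S) ≤ m q`.
-/

open Filter Topology

attribute [local instance] Matrix.linftyOpNormedAddCommGroup Matrix.linftyOpNormedRing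
  Matrix.linftyOpNormedAlgebra

lemma le_of_eventually_pow_le_mul_pow {a b C : ℝ} (hb : 0 ≤ b)
    (h : ∀ᶠ k in atTop, a ^ k ≤ C * b ^ k) : a ≤ b := by
  by_contra! hba
  have hsmall := ((isLittleO_pow_pow_of_lt_left hb hba).const_mul_left C).def one_half_pos
  obtain ⟨k, hk, hk'⟩ := (h.and hsmall).exists
  have hak : 0 < a ^ k := pow_pos (hb.trans_lt hba) k
  rw [Real.norm_eq_abs, Real.norm_eq_abs, abs_of_pos hak] at hk'
  linarith [le_abs_self (C * b ^ k)]

lemma Fintype.sum_pow_eq_sum_prod_ofFn {R ι : Type*} [Semiring R] [Fintype ι] (f : ι → R)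
    (j : ℕ) : (∑ i, f i) ^ j = ∑ g : Fin j → ι, (List.ofFn fun k => f (g k)).prod := by
  induction j with
  | zero => simp
  | succ j ih =>
    rw [pow_succ', ih, Finset.sum_mul_sum, ← Fintype.sum_prod_type']
    exact Fintype.sum_equiv (Fin.consEquiv fun _ => ι) _ _ fun _ => by simp [List.ofFn_succ]

lemma LinearMap.trace_pow_of_isNilpotent_sub_algebraMap {R M : Type*} [CommRing R] [IsReduced R]
    [AddCommGroup M] [Module R M] [Module.Free R M] [Module.Finite R M] {f : Module.End R M}
    {μ : R} (hf : IsNilpotent (f - algebraMap R _ μ)) (k : ℕ) :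
    trace R M (f ^ k) = Module.finrank R M * μ ^ k := by
  induction k with
  | zero => simp
  | succ k ih =>
    rw [pow_succ, Module.End.mul_eq_comp, trace_comp_eq_mul_of_commute_of_isNilpotent μ
      ((Commute.refl f).pow_left k) hf, ih]
    ring

namespace Module.End

variable {K V : Type*} [Field K] [AddCommGroup V] [Module K V] [FiniteDimensional K V]

lemma maxGenEigenspace_ne_bot_iff {f : End K V} {μ : K} :
    f.maxGenEigenspace μ ≠ ⊥ ↔ μ ∈ spectrum K f :=
  (hasUnifEigenvalue_iff_hasUnifEigenvalue_one (by simp)).trans hasUnifEigenvalue_iff_mem_spectrum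

theorem trace_pow_eq_sum_spectrum [IsAlgClosed K] (f : End K V) {s : Finset K}
    (hs : (s : Set K) = spectrum K f) (k : ℕ) :
    LinearMap.trace K V (f ^ k) = ∑ μ ∈ s, (finrank K (f.maxGenEigenspace μ) : K) * μ ^ k := by
  classical
  have hs' : {μ | f.maxGenEigenspace μ ≠ ⊥} = s := by
    ext μ; simp [maxGenEigenspace_ne_bot_iff, ← hs]
  have hdecomp := DirectSum.isInternal_submodule_of_iSupIndep_of_iSup_eq_top
    f.independent_maxGenEigenspace f.iSup_maxGenEigenspace_eq_top
  have hmaps (μ : K) : Set.MapsTo (f ^ k) (f.maxGenEigenspace μ) (f.maxGenEigenspace μ) :=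
    f.mapsTo_maxGenEigenspace_of_comm ((Commute.refl f).pow_right k) μ
  rw [LinearMap.trace_eq_sum_trace_restrict' hdecomp (hs' ▸ s.finite_toSet) hmaps]
  refine Finset.sum_congr (by ext; simp [hs']) fun μ _ => ?_
  have hmaps₁ := f.mapsTo_maxGenEigenspace_of_comm (Commute.refl f) μ
  have hnil : IsNilpotent (f.restrict hmaps₁ - algebraMap K _ μ) :=
    f.isNilpotent_restrict_maxGenEigenspace_sub_algebraMap μ
  rw [← pow_restrict k hmaps₁, LinearMap.trace_pow_of_isNilpotent_sub_algebraMap hnil]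

end Module.End

namespace Matrix

section Trace

variable {ι : Type*} [Fintype ι] [DecidableEq ι]

theorem exists_trace_pow_eq_sum_spectrum {K : Type*} [Field K] [IsAlgClosed K]
    (N : Matrix ι ι K) :
    ∃ d : K → ℕ, (∀ μ ∈ spectrum K N, 0 < d μ) ∧
      ∀ k : ℕ, (N ^ k).trace = ∑ μ ∈ N.finite_spectrum.toFinset, (d μ : K) * μ ^ k := by
  refine ⟨fun μ => Module.finrank K (Module.End.maxGenEigenspace N.toLin' μ), fun μ hμ => ?_,
    fun k => ?_⟩
  · rw [← spectrum_toLin', ← Module.End.maxGenEigenspace_ne_bot_iff] at hμ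
    have := Submodule.nontrivial_iff_ne_bot.mpr hμ
    exact Module.finrank_pos
  · rw [← trace_toLin'_eq, toLin'_pow]
    exact Module.End.trace_pow_eq_sum_spectrum _ (by simp [spectrum_toLin']) k

lemma norm_trace_le_card_mul (N : Matrix ι ι ℂ) {r : ℝ}
    (h : ∀ μ ∈ spectrum ℂ N, ‖μ‖ ≤ r) : ‖N.trace‖ ≤ Fintype.card ι * r := by
  obtain ⟨d, -, htr⟩ := N.exists_trace_pow_eq_sum_spectrum
  have hcard : (Fintype.card ι : ℝ) = ∑ μ ∈ N.finite_spectrum.toFinset, (d μ : ℝ) := by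
    have := htr 0
    simp only [pow_zero, trace_one, mul_one] at this
    exact_mod_cast this
  calc ‖N.trace‖ = ‖∑ μ ∈ N.finite_spectrum.toFinset, (d μ : ℂ) * μ‖ := by
        rw [← pow_one N, htr 1]; simp
    _ ≤ ∑ μ ∈ N.finite_spectrum.toFinset, (d μ : ℝ) * r := by
      refine (norm_sum_le _ _).trans (Finset.sum_le_sum fun μ hμ => ?_)
      rw [norm_mul, Complex.norm_natCast]
      gcongr
      exact h μ (by simpa using hμ)
    _ = Fintype.card ι * r := by rw [hcard, Finset.sum_mul]

lemma norm_le_of_eventually_norm_trace_pow_le (N : Matrix ι ι ℂ) {C r : ℝ} (hr : 0 ≤ r)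
    (h : ∀ᶠ k in atTop, ‖(N ^ k).trace‖ ≤ C * r ^ k) {μ : ℂ} (hμ : μ ∈ spectrum ℂ N) :
    ‖μ‖ ≤ r := by
  classical
  obtain ⟨d, hd, htr⟩ := N.exists_trace_pow_eq_sum_spectrum
  set s := N.finite_spectrum.toFinset
  have hμs : μ ∈ s := by simpa [s] using hμ
  -- `P` is `1` at `μ` and vanishes on the rest of the spectrum.
  set P := Lagrange.basis s id μ
  set T := Finset.range (P.natDegree + 1)
  have hisolate (k : ℕ) : (d μ : ℂ) * μ ^ k = ∑ t ∈ T, P.coeff t * (N ^ (k + t)).trace := calc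
    (d μ : ℂ) * μ ^ k = ∑ ν ∈ s, (d ν : ℂ) * ν ^ k * P.eval ν := by
      rw [Finset.sum_eq_single_of_mem μ hμs fun ν hν hνμ => ?_]
      · rw [show P.eval μ = 1 from Lagrange.eval_basis_self (Set.injOn_id _) hμs, mul_one]
      · rw [show P.eval ν = 0 from Lagrange.eval_basis_of_ne (v := id) hνμ.symm hν, mul_zero]
    _ = ∑ t ∈ T, P.coeff t * (N ^ (k + t)).trace := by
      simp_rw [htr, Polynomial.eval_eq_sum_range, Finset.mul_sum]
      rw [Finset.sum_comm]
      refine Finset.sum_congr rfl fun t _ => Finset.sum_congr rfl fun ν _ => ?_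
      ring
  obtain ⟨k₀, hk₀⟩ := eventually_atTop.mp h
  refine le_of_eventually_pow_le_mul_pow hr (C := ∑ t ∈ T, ‖P.coeff t‖ * (C * r ^ t)) ?_
  filter_upwards [eventually_ge_atTop k₀] with k hk
  calc ‖μ‖ ^ k ≤ d μ * ‖μ‖ ^ k :=
        le_mul_of_one_le_left (by positivity) (by exact_mod_cast hd μ hμ)
    _ = ‖∑ t ∈ T, P.coeff t * (N ^ (k + t)).trace‖ := by
      rw [← hisolate, norm_mul, norm_pow, Complex.norm_natCast]
    _ ≤ ∑ t ∈ T, ‖P.coeff t‖ * (C * r ^ (k + t)) := by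
      refine (norm_sum_le _ _).trans (Finset.sum_le_sum fun t _ => ?_)
      rw [norm_mul]
      gcongr
      exact hk₀ _ (by omega)
    _ = (∑ t ∈ T, ‖P.coeff t‖ * (C * r ^ t)) * r ^ k := by
      rw [Finset.sum_mul]
      refine Finset.sum_congr rfl fun t _ => ?_
      ring

end Trace

section Domination

variable {ι R : Type*} [Ring R] [LinearOrder R] [IsOrderedRing R]

lemma abs_mul_apply_le [Fintype ι] {P P' Q Q' : Matrix ι ι R}
    (hP : ∀ a b, |P a b| ≤ P' a b) (hQ : ∀ a b, |Q a b| ≤ Q' a b) (a b : ι) :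
    |(P * Q) a b| ≤ (P' * Q') a b := by
  simp only [mul_apply]
  refine (Finset.abs_sum_le_sum_abs _ _).trans (Finset.sum_le_sum fun k _ => ?_)
  rw [abs_mul]
  exact mul_le_mul (hP a k) (hQ k b) (abs_nonneg _) ((abs_nonneg _).trans (hP a k))

lemma abs_one_apply_le [DecidableEq ι] (a b : ι) :
    |(1 : Matrix ι ι R) a b| ≤ (1 : Matrix ι ι R) a b :=
  (abs_of_nonneg (zero_le_one_elem a b)).le

lemma abs_pow_apply_le [Fintype ι] [DecidableEq ι] {P Q : Matrix ι ι R}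
    (h : ∀ a b, |P a b| ≤ Q a b) (k : ℕ) (a b : ι) : |(P ^ k) a b| ≤ (Q ^ k) a b := by
  induction k generalizing a b with
  | zero => exact abs_one_apply_le a b
  | succ k ih => rw [pow_succ, pow_succ]; exact abs_mul_apply_le ih h a b

lemma abs_prod_ofFn_apply_le [Fintype ι] [DecidableEq ι] {κ : Type*} {A : κ → Matrix ι ι R}
    {Q : Matrix ι ι R} (h : ∀ i a b, |A i a b| ≤ Q a b) {j : ℕ} (g : Fin j → κ) (a b : ι) :
    |(List.ofFn fun k => A (g k)).prod a b| ≤ (Q ^ j) a b := by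
  induction j generalizing a b with
  | zero => exact abs_one_apply_le a b
  | succ j ih =>
    rw [List.ofFn_succ, List.prod_cons, pow_succ']
    exact abs_mul_apply_le (h _) (ih _) a b

end Domination

lemma norm_map_ofReal_le {ι : Type*} [Fintype ι] {P Q : Matrix ι ι ℝ}
    (h : ∀ a b, |P a b| ≤ Q a b) : ‖P.map Complex.ofReal‖ ≤ ‖Q.map Complex.ofReal‖ := by
  simp only [linfty_opNorm_def, map_apply, Complex.nnnorm_real, NNReal.coe_le_coe]
  refine Finset.sup_mono_fun fun a _ => Finset.sum_le_sum fun b _ => ?_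
  rw [← NNReal.coe_le_coe, coe_nnnorm, coe_nnnorm, Real.norm_eq_abs, Real.norm_eq_abs]
  exact (h a b).trans (le_abs_self _)

end Matrix

section SpectralRadius

variable {n : ℕ}

lemma map_ofReal_pow (M : Matrix (Fin n) (Fin n) ℝ) (k : ℕ) :
    (M ^ k).map Complex.ofReal = M.map Complex.ofReal ^ k :=
  M.map_pow Complex.ofRealHom k

lemma trace_map_ofReal (M : Matrix (Fin n) (Fin n) ℝ) :
    (M.map Complex.ofReal).trace = M.trace :=
  (AddMonoidHom.map_trace Complex.ofRealHom M).symm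

lemma specRad_nonneg (M : Matrix (Fin n) (Fin n) ℝ) : 0 ≤ specRad M :=
  Real.sSup_nonneg <| by rintro _ ⟨μ, -, rfl⟩; exact norm_nonneg μ

lemma norm_le_specRad {M : Matrix (Fin n) (Fin n) ℝ} {μ : ℂ}
    (hμ : μ ∈ spectrum ℂ (M.map Complex.ofReal)) : ‖μ‖ ≤ specRad M := by
  refine le_csSup ?_ ⟨μ, hμ, rfl⟩
  refine ((M.map Complex.ofReal).finite_spectrum.image (‖·‖)).bddAbove.mono ?_
  rintro _ ⟨ν, hν, rfl⟩
  exact ⟨ν, hν, rfl⟩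

lemma specRad_le_of_forall_norm_le {M : Matrix (Fin n) (Fin n) ℝ} {r : ℝ} (hr : 0 ≤ r)
    (h : ∀ μ ∈ spectrum ℂ (M.map Complex.ofReal), ‖μ‖ ≤ r) : specRad M ≤ r :=
  Real.sSup_le (by rintro _ ⟨μ, hμ, rfl⟩; exact h μ hμ) hr

lemma specRad_eq_toReal_spectralRadius (M : Matrix (Fin n) (Fin n) ℝ) :
    specRad M = (spectralRadius ℂ (M.map Complex.ofReal)).toReal := by
  rcases (spectrum ℂ (M.map Complex.ofReal)).eq_empty_or_nonempty with hσ | hσ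
  · simp [specRad, spectralRadius, hσ]
  obtain ⟨z, hz, hzr⟩ := spectrum.exists_nnnorm_eq_spectralRadius_of_nonempty hσ
  rw [← hzr, ENNReal.coe_toReal, coe_nnnorm]
  refine le_antisymm (specRad_le_of_forall_norm_le (norm_nonneg z) fun μ hμ => ?_)
    (norm_le_specRad hz)
  have : (‖μ‖₊ : ENNReal) ≤ ‖z‖₊ := hzr ▸ le_iSup₂ (α := ENNReal) μ hμ
  exact_mod_cast this

lemma tendsto_norm_pow_rpow_specRad (M : Matrix (Fin n) (Fin n) ℝ) :
    Tendsto (fun k : ℕ => ‖M.map Complex.ofReal ^ k‖ ^ (1 / k : ℝ)) atTop (𝓝 (specRad M)) := by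
  have hfin : spectralRadius ℂ (M.map Complex.ofReal) ≠ ⊤ :=
    ne_top_of_le_ne_top (by simp [ENNReal.mul_eq_top])
      (spectrum.spectralRadius_le_pow_nnnorm_pow_one_div ℂ _ 0)
  rw [specRad_eq_toReal_spectralRadius]
  refine ((ENNReal.tendsto_toReal hfin).comp
    (spectrum.pow_norm_pow_one_div_tendsto_nhds_spectralRadius _)).congr fun k => ?_
  exact ENNReal.toReal_ofReal (by positivity)

lemma specRad_pow (M : Matrix (Fin n) (Fin n) ℝ) {j : ℕ} (hj : j ≠ 0) :
    specRad (M ^ j) = specRad M ^ j := by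
  simp only [specRad_eq_toReal_spectralRadius, map_ofReal_pow, ← ENNReal.toReal_pow,
    spectralRadius, spectrum.map_pow_of_pos _ (Nat.pos_of_ne_zero hj), iSup_image, nnnorm_pow,
    ENNReal.coe_pow, ENNReal.iSup₂_pow_of_ne_zero _ hj]

lemma specRad_le_of_abs_le {P Q : Matrix (Fin n) (Fin n) ℝ}
    (h : ∀ a b, |P a b| ≤ Q a b) : specRad P ≤ specRad Q := by
  refine le_of_tendsto_of_tendsto' (tendsto_norm_pow_rpow_specRad P)
    (tendsto_norm_pow_rpow_specRad Q) fun k => ?_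
  rw [← map_ofReal_pow, ← map_ofReal_pow]
  gcongr
  exact Matrix.norm_map_ofReal_le (Matrix.abs_pow_apply_le h k)

lemma abs_trace_le_card_mul_specRad (M : Matrix (Fin n) (Fin n) ℝ) :
    |M.trace| ≤ n * specRad M := by
  simpa only [trace_map_ofReal, Complex.norm_real, Real.norm_eq_abs, Fintype.card_fin] using
    (M.map Complex.ofReal).norm_trace_le_card_mul fun μ hμ => norm_le_specRad hμ

lemma specRad_le_of_eventually_abs_trace_pow_le (M : Matrix (Fin n) (Fin n) ℝ) {C r : ℝ}
    (hr : 0 ≤ r) (h : ∀ᶠ k in atTop, |(M ^ k).trace| ≤ C * r ^ k) : specRad M ≤ r := by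
  refine specRad_le_of_forall_norm_le hr fun μ hμ =>
    (M.map Complex.ofReal).norm_le_of_eventually_norm_trace_pow_le (C := C) hr ?_ hμ
  simpa only [← map_ofReal_pow, trace_map_ofReal, Complex.norm_real, Real.norm_eq_abs] using h

end SpectralRadius

section JointSpectralRadius

variable {n : ℕ}

lemma prodSet_range {ι : Type*} (A : ι → Matrix (Fin n) (Fin n) ℝ) (j : ℕ) :
    prodSet (Set.range A) j = Set.range fun g : Fin j → ι => (List.ofFn fun k => A (g k)).prod := by
  ext W
  constructor
  · rintro ⟨f, hf, rfl⟩
    choose g hg using hf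
    exact ⟨g, by simp [hg]⟩
  · rintro ⟨g, rfl⟩
    exact ⟨fun k => A (g k), fun k => ⟨g k, rfl⟩, rfl⟩

variable (𝒜 : Set (Matrix (Fin n) (Fin n) ℝ))

noncomputable def supSpecRad (j : ℕ) : ℝ :=
  sSup (specRad '' prodSet 𝒜 j)

lemma jsr_eq_limsup : jsr 𝒜 = limsup (fun j : ℕ => supSpecRad 𝒜 j ^ (1 / j : ℝ)) atTop := rfl

lemma supSpecRad_nonneg (j : ℕ) : 0 ≤ supSpecRad 𝒜 j :=
  Real.sSup_nonneg <| by rintro _ ⟨W, -, rfl⟩; exact specRad_nonneg W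

lemma jsr_nonneg : 0 ≤ jsr 𝒜 := by
  rw [jsr_eq_limsup, limsup_eq]
  refine Real.sInf_nonneg fun a ha => ?_
  obtain ⟨j, hj⟩ := ha.exists
  exact (Real.rpow_nonneg (supSpecRad_nonneg 𝒜 j) _).trans hj

variable {𝒜} {r : ℝ}

lemma supSpecRad_rpow_le (hr : 0 ≤ r) (h : ∀ j ≠ 0, ∀ W ∈ prodSet 𝒜 j, specRad W ≤ r ^ j)
    {j : ℕ} (hj : j ≠ 0) : supSpecRad 𝒜 j ^ (1 / j : ℝ) ≤ r := by
  have hsup : supSpecRad 𝒜 j ≤ r ^ j :=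
    Real.sSup_le (by rintro _ ⟨W, hW, rfl⟩; exact h j hj W hW) (by positivity)
  calc supSpecRad 𝒜 j ^ (1 / j : ℝ) ≤ (r ^ j) ^ (1 / j : ℝ) := by
        gcongr; exact supSpecRad_nonneg 𝒜 j
    _ = r := by rw [one_div, Real.pow_rpow_inv_natCast hr hj]

lemma jsr_le_of_forall_specRad_le (hr : 0 ≤ r)
    (h : ∀ j ≠ 0, ∀ W ∈ prodSet 𝒜 j, specRad W ≤ r ^ j) : jsr 𝒜 ≤ r := by
  rw [jsr_eq_limsup]
  refine limsup_le_of_le (isCoboundedUnder_le_of_le atTop fun j =>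
    Real.rpow_nonneg (supSpecRad_nonneg 𝒜 j) _) ?_
  filter_upwards [eventually_ne_atTop 0] with j hj using supSpecRad_rpow_le hr h hj

lemma eventually_supSpecRad_le_of_jsr_lt (hr : 0 ≤ r)
    (h : ∀ j ≠ 0, ∀ W ∈ prodSet 𝒜 j, specRad W ≤ r ^ j) {q : ℝ} (hq : jsr 𝒜 < q) :
    ∀ᶠ j in atTop, supSpecRad 𝒜 j ≤ q ^ j := by
  have hbdd : IsBoundedUnder (· ≤ ·) atTop fun j : ℕ => supSpecRad 𝒜 j ^ (1 / j : ℝ) :=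
    isBoundedUnder_of_eventually_le <|
      eventually_ne_atTop 0 |>.mono fun j hj => supSpecRad_rpow_le hr h hj
  filter_upwards [eventually_lt_of_limsup_lt hq hbdd, eventually_ne_atTop 0] with j hjq hj
  calc supSpecRad 𝒜 j = (supSpecRad 𝒜 j ^ (1 / j : ℝ)) ^ j := by
        rw [one_div, Real.rpow_inv_natCast_pow (supSpecRad_nonneg 𝒜 j) hj]
    _ ≤ q ^ j := pow_le_pow_left₀ (Real.rpow_nonneg (supSpecRad_nonneg 𝒜 j) _) hjq.le j

lemma specRad_prod_ofFn_le_supSpecRad {ι : Type*} [Finite ι] (A : ι → Matrix (Fin n) (Fin n) ℝ)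
    {j : ℕ} (g : Fin j → ι) :
    specRad (List.ofFn fun k => A (g k)).prod ≤ supSpecRad (Set.range A) j := by
  refine le_csSup ?_ ⟨_, by rw [prodSet_range]; exact ⟨g, rfl⟩, rfl⟩
  rw [prodSet_range]
  exact ((Set.finite_range _).image _).bddAbove

lemma specRad_le_specRad_sum_pow_of_mem_prodSet {ι : Type*} [Fintype ι]
    {A : ι → Matrix (Fin n) (Fin n) ℝ} (hA : ∀ i a b, 0 ≤ A i a b) :
    ∀ j ≠ 0, ∀ W ∈ prodSet (Set.range A) j, specRad W ≤ specRad (∑ i, A i) ^ j := by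
  have hAS (i : ι) (a b : Fin n) : |A i a b| ≤ (∑ i, A i) a b := by
    rw [abs_of_nonneg (hA i a b), Matrix.sum_apply]
    exact Finset.single_le_sum (fun i' _ => hA i' a b) (Finset.mem_univ i)
  intro j hj
  rw [prodSet_range]
  rintro _ ⟨g, rfl⟩
  exact (specRad_le_of_abs_le (Matrix.abs_prod_ofFn_apply_le hAS g)).trans_eq (specRad_pow _ hj)

lemma abs_trace_sum_pow_le {ι : Type*} [Fintype ι] (A : ι → Matrix (Fin n) (Fin n) ℝ) (j : ℕ) :
    |((∑ i, A i) ^ j).trace| ≤ Fintype.card ι ^ j * n * supSpecRad (Set.range A) j := by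
  rw [Fintype.sum_pow_eq_sum_prod_ofFn, Matrix.trace_sum]
  calc _ ≤ ∑ _g : Fin j → ι, n * supSpecRad (Set.range A) j :=
        (Finset.abs_sum_le_sum_abs _ _).trans <| Finset.sum_le_sum fun g _ =>
          (abs_trace_le_card_mul_specRad _).trans <| by
            gcongr; exact specRad_prod_ofFn_le_supSpecRad A g
    _ = _ := by simp [mul_assoc]

end JointSpectralRadius

theorem jsr_nonneg_entries_bounds_general_general {n m : ℕ}
    (A : Fin m → Matrix (Fin n) (Fin n) ℝ)
    (hA : ∀ i, ∀ a b, 0 ≤ A i a b) :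
    specRad (∑ i, A i) / m ≤ jsr (Set.range A) ∧
    jsr (Set.range A) ≤ specRad (∑ i, A i) := by
  set S := ∑ i, A i
  have hword := specRad_le_specRad_sum_pow_of_mem_prodSet hA
  have hρ := specRad_nonneg S
  refine ⟨le_of_forall_gt_imp_ge_of_dense fun q hq => ?_, jsr_le_of_forall_specRad_le hρ hword⟩
  have hq0 : 0 ≤ q := (jsr_nonneg _).trans hq.le
  refine div_le_of_le_mul₀ (Nat.cast_nonneg m) hq0 ?_
  refine specRad_le_of_eventually_abs_trace_pow_le S (C := n) (by positivity) ?_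
  filter_upwards [eventually_supSpecRad_le_of_jsr_lt hρ hword hq] with j hj
  calc |(S ^ j).trace| ≤ m ^ j * n * supSpecRad (Set.range A) j := by
        simpa using abs_trace_sum_pow_le A j
    _ ≤ m ^ j * n * q ^ j := by gcongr
    _ = n * (q * m) ^ j := by ring

/-- For a finite nonempty family A₁, …, A_m of matrices with nonnegative entries,
ρ(A₁ + ⋯ + A_m)/m ≤ ρ({A₁, …, A_m}) ≤ ρ(A₁ + ⋯ + A_m). -/
theorem jsr_nonneg_entries_bounds_general {n m : ℕ} (hm : 0 < m)
    (A : Fin m → Matrix (Fin n) (Fin n) ℝ)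
    (hA : ∀ i, ∀ a b, 0 ≤ A i a b) :
    specRad (∑ i, A i) / m ≤ jsr (Set.range A) ∧
    jsr (Set.range A) ≤ specRad (∑ i, A i) :=
  jsr_nonneg_entries_bounds_general_general A hA
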